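/- arXiv:1711.08020 — 9 statements merged into one kernel-verified Lean document; each statement's English description precedes it below -/
import Mathlib

section
/- Fix β > 0 and an index j. Let f_j : ℝ^p → ℝ be convex and differentiable with ‖∇f_j(x̂) − ∇f_j(x̃)‖ ≤ L_j‖x̂ − x̃‖ and ‖∇f_j(x)‖ ≤ B_j for all x, x̂, x̃ ∈ ℝ^p, and fix z_j ∈ ℝ. Then the function h_j(x) = ψ_β(f_j(x), z_j) is differentiable with ∇h_j(x) = max(β f_j(x) + z_j, 0)·∇f_j(x), and for all x̂, x ∈ ℝ^p, ‖∇h_j(x̂) − ∇h_j(x)‖ ≤ (β B_j² + L_j·max(β f_j(x) + z_j, 0))·‖x̂ − x‖. -/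
open scoped RealInnerProductSpace

noncomputable section

/-- The function `ψ_β(u,v)` used in the classic augmented Lagrangian. -/
def psi (β u v : ℝ) : ℝ :=
  if 0 ≤ β * u + v then u * v + β / 2 * u ^ 2 else -(v ^ 2) / (2 * β)

lemma psi_eq (β u v : ℝ) (hβ : 0 < β) :
    psi β u v = ((max (β * u + v) 0) ^ 2 - v ^ 2) / (2 * β) := by
  unfold psi
  split_ifs with h
  · rw [max_eq_left h]; field_simp; ring
  · rw [max_eq_right (le_of_lt (not_le.mp h))]; ring

lemma sq_max_hasDerivAt (u : ℝ) :
    HasDerivAt (fun t : ℝ => (max t 0) ^ 2) (2 * max u 0) u := by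
  rcases lt_trichotomy u 0 with h | h | h
  · have : HasDerivAt (fun _ : ℝ => (0 : ℝ)) 0 u := hasDerivAt_const u 0
    rw [max_eq_right h.le, mul_zero]
    apply this.congr_of_eventuallyEq
    filter_upwards [eventually_lt_nhds h] with t ht
    rw [max_eq_right ht.le]; norm_num
  · subst h
    rw [max_self, mul_zero]
    rw [hasDerivAt_iff_isLittleO]
    have h1 : (fun t : ℝ => (max t 0) ^ 2 - (max (0:ℝ) 0) ^ 2 - 0 • (t - 0))
        =O[nhds 0] fun t : ℝ => t * t := by
      apply Asymptotics.IsBigO.of_bound 1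
      filter_upwards with t
      simp only [max_self, smul_zero, sub_zero]
      rcases le_or_gt t 0 with ht | ht
      · simp [max_eq_right ht, abs_mul, mul_self_nonneg]
      · rw [max_eq_left ht.le]
        simp [sq, abs_mul]
    have h2 : (fun t : ℝ => t * t) =o[nhds 0] fun t : ℝ => t - 0 := by
      simp only [sub_zero]
      have : (fun t : ℝ => t) =o[nhds 0] fun _ : ℝ => (1 : ℝ) := by
        rw [Asymptotics.isLittleO_one_iff]
        exact Filter.tendsto_id
      simpa using this.mul_isBigO (Asymptotics.isBigO_refl (fun t : ℝ => t) _)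
    simpa [smul_eq_mul, mul_comm] using h1.trans_isLittleO h2
  · have : HasDerivAt (fun t : ℝ => t ^ 2) (2 * u) u := by
      simpa using hasDerivAt_pow 2 u
    rw [max_eq_left h.le]
    apply this.congr_of_eventuallyEq
    filter_upwards [eventually_gt_nhds h] with t ht
    rw [max_eq_left ht.le]

lemma psi_hasDerivAt (β z : ℝ) (hβ : 0 < β) (u : ℝ) :
    HasDerivAt (fun u => psi β u z) (max (β * u + z) 0) u := by
  have haff : HasDerivAt (fun t : ℝ => β * t + z) β u := by
    simpa using ((hasDerivAt_id u).const_mul β).add_const z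
  have hsq := sq_max_hasDerivAt (β * u + z)
  have hcomp := hsq.comp u haff
  have h : HasDerivAt (fun t : ℝ => ((max (β * t + z) 0) ^ 2 - z ^ 2) / (2 * β))
      (2 * max (β * u + z) 0 * β / (2 * β)) u := by
    exact ((hcomp.sub_const (z ^ 2)).div_const (2 * β))
  have heq : 2 * max (β * u + z) 0 * β / (2 * β) = max (β * u + z) 0 := by
    field_simp
  rw [heq] at h
  apply h.congr_of_eventuallyEq
  filter_upwards with t
  rw [psi_eq β t z hβ]

/-- for a convex differentiable `f` with `L`-Lipschitz gradient bounded by `B`,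
the function `h(x) = ψ_β(f(x), z)` is differentiable with gradient
`max(β f(x) + z, 0) • ∇f(x)`, and this gradient satisfies the stated Lipschitz-type bound. -/
theorem stmt0 {p : ℕ} (β : ℝ) (hβ : 0 < β)
    (f : EuclideanSpace ℝ (Fin p) → ℝ) (f' : EuclideanSpace ℝ (Fin p) → EuclideanSpace ℝ (Fin p))
    (L B : ℝ)
    (hconv : ConvexOn ℝ Set.univ f)
    (hdiff : ∀ x, HasGradientAt f (f' x) x)
    (hL : ∀ xh xt, ‖f' xh - f' xt‖ ≤ L * ‖xh - xt‖)
    (hB : ∀ x, ‖f' x‖ ≤ B)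
    (z : ℝ) :
    (∀ x, HasGradientAt (fun x => psi β (f x) z) (max (β * f x + z) 0 • f' x) x) ∧
    (∀ xh x, ‖max (β * f xh + z) 0 • f' xh - max (β * f x + z) 0 • f' x‖
        ≤ (β * B ^ 2 + L * max (β * f x + z) 0) * ‖xh - x‖) := by
  constructor
  · intro x
    have hf : HasFDerivAt f (InnerProductSpace.toDual ℝ _ (f' x)) x :=
      (hasGradientAt_iff_hasFDerivAt.mp (hdiff x))
    have hg := psi_hasDerivAt β z hβ (f x)
    have hcomp := hg.comp_hasFDerivAt x hf
    rw [hasGradientAt_iff_hasFDerivAt, map_smul]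
    exact hcomp
  · intro xh x
    have hBnn : 0 ≤ B := le_trans (norm_nonneg _) (hB x)
    -- f is B-Lipschitz
    have hflip : |f xh - f x| ≤ B * ‖xh - x‖ := by
      have := Convex.norm_image_sub_le_of_norm_hasFDerivWithin_le
        (f := f) (C := B) (s := (Set.univ : Set (EuclideanSpace ℝ (Fin p))))
        (fun y _ => (hasGradientAt_iff_hasFDerivAt.mp (hdiff y)).hasFDerivWithinAt)
        (fun y _ => by
          rw [(InnerProductSpace.toDual ℝ _).norm_map]
          exact hB y)
        convex_univ (Set.mem_univ x) (Set.mem_univ xh)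
      simpa [Real.norm_eq_abs] using this
    set m : EuclideanSpace ℝ (Fin p) → ℝ := fun y => max (β * f y + z) 0 with hm
    have hmnn : ∀ y, 0 ≤ m y := fun y => le_max_right _ _
    have hmdiff : |m xh - m x| ≤ β * B * ‖xh - x‖ := by
      have h1 : |m xh - m x| ≤ |(β * f xh + z) - (β * f x + z)| :=
        abs_max_sub_max_le_abs _ _ _
      have h2 : (β * f xh + z) - (β * f x + z) = β * (f xh - f x) := by ring
      rw [h2, abs_mul, abs_of_pos hβ] at h1
      calc |m xh - m x| ≤ β * |f xh - f x| := h1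
        _ ≤ β * (B * ‖xh - x‖) := by
            exact mul_le_mul_of_nonneg_left hflip hβ.le
        _ = β * B * ‖xh - x‖ := by ring
    have key : m xh • f' xh - m x • f' x
        = (m xh - m x) • f' xh + m x • (f' xh - f' x) := by
      rw [sub_smul, smul_sub]; abel
    calc ‖m xh • f' xh - m x • f' x‖
        = ‖(m xh - m x) • f' xh + m x • (f' xh - f' x)‖ := by rw [key]
      _ ≤ ‖(m xh - m x) • f' xh‖ + ‖m x • (f' xh - f' x)‖ := norm_add_le _ _
      _ = |m xh - m x| * ‖f' xh‖ + |m x| * ‖f' xh - f' x‖ := by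
          rw [norm_smul, norm_smul]; rfl
      _ ≤ (β * B * ‖xh - x‖) * B + m x * (L * ‖xh - x‖) := by
          apply add_le_add
          · exact mul_le_mul hmdiff (hB xh) (norm_nonneg _) (by positivity)
          · rw [abs_of_nonneg (hmnn x)]
            exact mul_le_mul_of_nonneg_left (hL xh x) (hmnn x)
      _ = (β * B ^ 2 + L * m x) * ‖xh - x‖ := by ring

end
end

section
/- Let β > 0 and let f_1,…,f_m : ℝ^p → ℝ be convex and differentiable with ‖∇f_j(x̂) − ∇f_j(x̃)‖ ≤ L_j‖x̂ − x̃‖ and ‖∇f_j(x)‖ ≤ B_j for all x, x̂, x̃ ∈ ℝ^p and all j. Then for all x̂, x ∈ ℝ^p and all z ∈ ℝ^m, ‖∇_x Ψ_β(x̂, z) − ∇_x Ψ_β(x, z)‖ ≤ L_Ψ(x,z)·‖x̂ − x‖, where L_Ψ(x,z) = ∑_{j=1}^m (β B_j² + L_j·max(β f_j(x) + z_j, 0)). -/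
/-!
Since `ψ_β(u,v) = (max(βu+v,0)² − v²)/(2β)` and `t ↦ max(t,0)²/2` has derivative `max(t,0)`
with a quadratic Taylor remainder, `∇_x Ψ_β(x,z) = ∑_j max(βf_j(x)+z_j,0) ∇f_j(x)`.
Writing `a, b` for the two multipliers at `x̂` and `x`, each summand of the difference splits as
`(a − b)∇f_j(x̂) + b(∇f_j(x̂) − ∇f_j(x))`: the first part is at most `β B_j² ‖x̂ − x‖` because
`max(·,0)` is 1-Lipschitz and `f_j` is `B_j`-Lipschitz, the second at most `L_j b ‖x̂ − x‖`.
-/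

open scoped RealInnerProductSpace

noncomputable section

/-- `Ψ_β(x,z) = ∑_j ψ_β(f_j(x), z_j)`. -/
def PsiAug {p m : ℕ} (β : ℝ) (f : Fin m → EuclideanSpace ℝ (Fin p) → ℝ)
    (x : EuclideanSpace ℝ (Fin p)) (z : EuclideanSpace ℝ (Fin m)) : ℝ :=
  ∑ j, psi β (f j x) (z j)

open Asymptotics Filter

theorem hasDerivAt_of_abs_sub_sub_le_sq {f : ℝ → ℝ} {f' x C : ℝ}
    (h : ∀ y, |f y - f x - f' * (y - x)| ≤ C * (y - x) ^ 2) : HasDerivAt f f' x := by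
  rw [hasDerivAt_iff_isLittleO]
  refine IsBigO.trans_isLittleO (g := fun y => ‖y - x‖ ^ 2) ?_ (isLittleO_pow_sub_sub x one_lt_two)
  refine IsBigO.of_bound C (Eventually.of_forall fun y => ?_)
  simpa [Real.norm_eq_abs, mul_comm f'] using h y

theorem abs_sq_posPart_sub_sub_le (t t' : ℝ) :
    |max t' 0 ^ 2 / 2 - max t 0 ^ 2 / 2 - max t 0 * (t' - t)| ≤ 1 / 2 * (t' - t) ^ 2 := by
  rw [abs_le]
  rcases le_total 0 t with ht | ht <;> rcases le_total 0 t' with ht' | ht' <;>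
    simp only [max_eq_left, max_eq_right, ht, ht'] <;>
    constructor <;> nlinarith [sq_nonneg (t' - t)]

theorem hasDerivAt_sq_posPart_div_two (t : ℝ) :
    HasDerivAt (fun t : ℝ => max t 0 ^ 2 / 2) (max t 0) t :=
  hasDerivAt_of_abs_sub_sub_le_sq fun t' => abs_sq_posPart_sub_sub_le t t'

theorem psi_eq_sq_posPart {β : ℝ} (hβ : β ≠ 0) (u v : ℝ) :
    psi β u v = (max (β * u + v) 0 ^ 2 / 2 - v ^ 2 / 2) / β := by
  unfold psi
  split_ifs with h
  · rw [max_eq_left h]; field_simp; ring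
  · rw [max_eq_right (not_le.mp h).le]; field_simp; ring

theorem hasDerivAt_psi {β : ℝ} (hβ : β ≠ 0) (u v : ℝ) :
    HasDerivAt (fun u => psi β u v) (max (β * u + v) 0) u := by
  simp_rw [psi_eq_sq_posPart hβ]
  have hinner : HasDerivAt (fun u => β * u + v) β u := by
    simpa using ((hasDerivAt_id u).const_mul β).add_const v
  exact ((((hasDerivAt_sq_posPart_div_two _).comp u hinner).sub_const _).div_const β).congr_deriv
    (by field_simp)

theorem hasGradientAt_PsiAug {p m : ℕ} {β : ℝ} (hβ : β ≠ 0)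
    {f : Fin m → EuclideanSpace ℝ (Fin p) → ℝ}
    {f' : Fin m → EuclideanSpace ℝ (Fin p) → EuclideanSpace ℝ (Fin p)}
    (hf : ∀ j x, HasGradientAt (f j) (f' j x) x) (z : EuclideanSpace ℝ (Fin m))
    (x : EuclideanSpace ℝ (Fin p)) :
    HasGradientAt (fun x => PsiAug β f x z) (∑ j, max (β * f j x + z j) 0 • f' j x) x := by
  rw [hasGradientAt_iff_hasFDerivAt, map_sum]
  simp only [map_smul]
  exact HasFDerivAt.fun_sum fun j _ =>
    (hasDerivAt_psi hβ (f j x) (z j)).comp_hasFDerivAt x (hf j x).hasFDerivAt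

theorem norm_smul_sub_smul_le {E : Type*} [SeminormedAddCommGroup E] [NormedSpace ℝ E]
    {a b : ℝ} (hb : 0 ≤ b) (u v : E) :
    ‖a • u - b • v‖ ≤ |a - b| * ‖u‖ + b * ‖u - v‖ := by
  calc ‖a • u - b • v‖ = ‖(a - b) • u + b • (u - v)‖ := by
        rw [sub_smul, smul_sub, sub_add_sub_cancel]
    _ ≤ |a - b| * ‖u‖ + b * ‖u - v‖ := by
        grw [norm_add_le, norm_smul, norm_smul, Real.norm_eq_abs, Real.norm_of_nonneg hb]

section

variable {E : Type*} [NormedAddCommGroup E] [InnerProductSpace ℝ E] [CompleteSpace E]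

theorem abs_sub_le_of_norm_hasGradientAt_le {g : E → ℝ} {g' : E → E} {B : ℝ}
    (hg : ∀ x, HasGradientAt g (g' x) x) (hB : ∀ x, ‖g' x‖ ≤ B) (x y : E) :
    |g y - g x| ≤ B * ‖y - x‖ := by
  simpa only [Real.norm_eq_abs] using convex_univ.norm_image_sub_le_of_norm_hasFDerivWithin_le
    (fun x _ => (hg x).hasFDerivAt.hasFDerivWithinAt) (fun x _ => by simpa using hB x)
    (Set.mem_univ x) (Set.mem_univ y)

theorem norm_posPart_smul_gradient_sub_le {g : E → ℝ} {g' : E → E} {β c L B : ℝ} (hβ : 0 ≤ β)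
    (hg : ∀ x, HasGradientAt g (g' x) x) (hL : ∀ x y, ‖g' x - g' y‖ ≤ L * ‖x - y‖)
    (hB : ∀ x, ‖g' x‖ ≤ B) (y x : E) :
    ‖max (β * g y + c) 0 • g' y - max (β * g x + c) 0 • g' x‖
      ≤ (β * B ^ 2 + L * max (β * g x + c) 0) * ‖y - x‖ := by
  have hmax : |max (β * g y + c) 0 - max (β * g x + c) 0| ≤ β * (B * ‖y - x‖) :=
    calc _ ≤ |(β * g y + c) - (β * g x + c)| := abs_max_sub_max_le_abs _ _ _
      _ = β * |g y - g x| := by rw [add_sub_add_right_eq_sub, ← mul_sub, abs_mul, abs_of_nonneg hβ]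
      _ ≤ β * (B * ‖y - x‖) := by grw [abs_sub_le_of_norm_hasGradientAt_le hg hB x y]
  have hB0 : 0 ≤ B := (norm_nonneg _).trans (hB x)
  calc _ ≤ |max (β * g y + c) 0 - max (β * g x + c) 0| * ‖g' y‖
          + max (β * g x + c) 0 * ‖g' y - g' x‖ := norm_smul_sub_smul_le (le_max_right _ _) _ _
    _ ≤ β * (B * ‖y - x‖) * B + max (β * g x + c) 0 * (L * ‖y - x‖) := by
        grw [hmax, hB y, hL y x]
    _ = (β * B ^ 2 + L * max (β * g x + c) 0) * ‖y - x‖ := by ring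

end

theorem stmt1_general {p m : ℕ} (β : ℝ) (hβ : 0 < β)
    (f : Fin m → EuclideanSpace ℝ (Fin p) → ℝ)
    (f' : Fin m → EuclideanSpace ℝ (Fin p) → EuclideanSpace ℝ (Fin p))
    (L B : Fin m → ℝ)
    (hdiff : ∀ j x, HasGradientAt (f j) (f' j x) x)
    (hL : ∀ j xh xt, ‖f' j xh - f' j xt‖ ≤ L j * ‖xh - xt‖)
    (hB : ∀ j x, ‖f' j x‖ ≤ B j)
    (xh x : EuclideanSpace ℝ (Fin p)) (z : EuclideanSpace ℝ (Fin m)) :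
    ‖gradient (fun x => PsiAug β f x z) xh - gradient (fun x => PsiAug β f x z) x‖
      ≤ (∑ j, (β * (B j) ^ 2 + L j * max (β * f j x + z j) 0)) * ‖xh - x‖ := by
  rw [gradient_eq (hasGradientAt_PsiAug hβ.ne' hdiff z), ← Finset.sum_sub_distrib,
    Finset.sum_mul]
  exact (norm_sum_le _ _).trans <| Finset.sum_le_sum fun j _ =>
    norm_posPart_smul_gradient_sub_le hβ.le (hdiff j) (hL j) (hB j) xh x

/-- the `x`-gradient of `Ψ_β(·,z)` satisfies
`‖∇_x Ψ_β(xh,z) − ∇_x Ψ_β(x,z)‖ ≤ L_Ψ(x,z) ‖xh − x‖` with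
`L_Ψ(x,z) = ∑_j (β B_j² + L_j max(β f_j(x) + z_j, 0))`. -/
theorem stmt1 {p m : ℕ} (β : ℝ) (hβ : 0 < β)
    (f : Fin m → EuclideanSpace ℝ (Fin p) → ℝ)
    (f' : Fin m → EuclideanSpace ℝ (Fin p) → EuclideanSpace ℝ (Fin p))
    (L B : Fin m → ℝ)
    (hconv : ∀ j, ConvexOn ℝ Set.univ (f j))
    (hdiff : ∀ j x, HasGradientAt (f j) (f' j x) x)
    (hL : ∀ j xh xt, ‖f' j xh - f' j xt‖ ≤ L j * ‖xh - xt‖)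
    (hB : ∀ j x, ‖f' j x‖ ≤ B j)
    (xh x : EuclideanSpace ℝ (Fin p)) (z : EuclideanSpace ℝ (Fin m)) :
    ‖gradient (fun x => PsiAug β f x z) xh - gradient (fun x => PsiAug β f x z) x‖
      ≤ (∑ j, (β * (B j) ^ 2 + L j * max (β * f j x + z j) 0)) * ‖xh - x‖ :=
  stmt1_general β hβ f f' L B hdiff hL hB xh x z

end
end

section
/- Let {P^k} be a sequence of symmetric positive definite d×d real matrices and let P̲ and P̄ be symmetric positive definite d×d matrices such that P̲ ⪯ P^k ⪯ P̄ (Loewner order) for all k. Let W ⊆ ℝ^d be nonempty. Suppose the sequence {w^k} ⊂ ℝ^d satisfies ‖w^{k+1} − w‖²_{P^{k+1}} ≤ ‖w^k − w‖²_{P^k} for every w ∈ W and every k, and suppose {w^k} has a cluster point w̄ ∈ W (i.e., some subsequence converges to w̄). Then the whole sequence w^k converges to w̄. -/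
/-!
The energy `a k = ‖w k - w̄‖²_{P k}` is nonincreasing. It is squeezed between `‖w k - w̄‖²_{P̲}`
and `‖w k - w̄‖²_{P̄}`; the upper bound tends to `0` along the convergent subsequence, so the
monotone energy tends to `0` along the whole sequence, and then so does the lower bound, which
controls `‖w k - w̄‖²` because `P̲` is positive definite.
-/

open Filter Matrix Topology

variable {n : Type*} [Fintype n]

lemma continuous_dotProduct_mulVec_self (M : Matrix n n ℝ) :
    Continuous fun x : n → ℝ => x ⬝ᵥ M *ᵥ x := by
  fun_prop

lemma dotProduct_mulVec_self_le_of_posSemidef_sub {A B : Matrix n n ℝ} (h : (B - A).PosSemidef)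
    (x : n → ℝ) : x ⬝ᵥ A *ᵥ x ≤ x ⬝ᵥ B *ᵥ x := by
  have := h.dotProduct_mulVec_nonneg x
  rwa [star_trivial, sub_mulVec, dotProduct_sub, sub_nonneg] at this

lemma Matrix.PosDef.exists_pos_mul_sq_norm_le_dotProduct_mulVec {M : Matrix n n ℝ}
    (hM : M.PosDef) :
    ∃ c > 0, ∀ x : n → ℝ, c * ‖x‖ ^ 2 ≤ x ⬝ᵥ M *ᵥ x := by
  rcases subsingleton_or_nontrivial (n → ℝ) with _ | _
  · exact ⟨1, one_pos, fun x => by simp [Subsingleton.elim x 0]⟩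
  obtain ⟨u, hu, hmin⟩ := (isCompact_sphere (0 : n → ℝ) 1).exists_isMinOn
    (NormedSpace.sphere_nonempty.2 zero_le_one) (continuous_dotProduct_mulVec_self M).continuousOn
  have hu0 : u ≠ 0 := ne_zero_of_mem_unit_sphere ⟨u, hu⟩
  refine ⟨u ⬝ᵥ M *ᵥ u, by simpa using hM.dotProduct_mulVec_pos hu0, fun x => ?_⟩
  rcases eq_or_ne x 0 with rfl | hx
  · simp
  have hxn : ‖x‖ ≠ 0 := norm_ne_zero_iff.2 hx
  have hxs : ‖x‖⁻¹ • x ∈ Metric.sphere (0 : n → ℝ) 1 := by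
    simp [norm_smul, hxn]
  calc u ⬝ᵥ M *ᵥ u * ‖x‖ ^ 2
      ≤ (‖x‖⁻¹ • x) ⬝ᵥ M *ᵥ (‖x‖⁻¹ • x) * ‖x‖ ^ 2 := by gcongr; exact hmin hxs
    _ = x ⬝ᵥ M *ᵥ x := by
      simp only [mulVec_smul, smul_dotProduct, dotProduct_smul, smul_eq_mul]
      field_simp

lemma Matrix.PosDef.tendsto_zero_of_dotProduct_mulVec_self {ι : Type*} {l : Filter ι}
    {M : Matrix n n ℝ} (hM : M.PosDef) {x : ι → n → ℝ}
    (hx : Tendsto (fun i => x i ⬝ᵥ M *ᵥ x i) l (𝓝 0)) : Tendsto x l (𝓝 0) := by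
  obtain ⟨c, hc, hcM⟩ := hM.exists_pos_mul_sq_norm_le_dotProduct_mulVec
  have hsq : Tendsto (fun i => ‖x i‖ ^ 2) l (𝓝 0) := by
    refine squeeze_zero (fun i => by positivity) (fun i => ?_) (by simpa using hx.const_mul c⁻¹)
    rw [le_inv_mul_iff₀ hc]
    exact hcM (x i)
  rw [tendsto_zero_iff_norm_tendsto_zero]
  simpa using hsq.sqrt

theorem stmt3_general {d : ℕ} (P : ℕ → Matrix (Fin d) (Fin d) ℝ)
    (Plow Pup : Matrix (Fin d) (Fin d) ℝ)
    (hlow : Plow.PosDef)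
    (hlb : ∀ k, (P k - Plow).PosSemidef) (hub : ∀ k, (Pup - P k).PosSemidef)
    (W : Set (Fin d → ℝ))
    (w : ℕ → Fin d → ℝ)
    (hmono : ∀ (k : ℕ), ∀ v ∈ W,
      (w (k + 1) - v) ⬝ᵥ ((P (k + 1)).mulVec (w (k + 1) - v))
        ≤ (w k - v) ⬝ᵥ ((P k).mulVec (w k - v)))
    (wbar : Fin d → ℝ) (hwbar : wbar ∈ W)
    (φ : ℕ → ℕ) (hφ : StrictMono φ)
    (hcluster : Tendsto (w ∘ φ) atTop (nhds wbar)) :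
    Tendsto w atTop (nhds wbar) := by
  set a : ℕ → ℝ := fun k => (w k - wbar) ⬝ᵥ P k *ᵥ (w k - wbar)
  have ha_anti : Antitone a := antitone_nat_of_succ_le fun k => hmono k wbar hwbar
  have ha_low : ∀ k, (w k - wbar) ⬝ᵥ Plow *ᵥ (w k - wbar) ≤ a k := fun k =>
    dotProduct_mulVec_self_le_of_posSemidef_sub (hlb k) _
  have hlow_nonneg : ∀ x, 0 ≤ x ⬝ᵥ Plow *ᵥ x := fun x => by
    simpa using hlow.posSemidef.dotProduct_mulVec_nonneg x
  have ha_nonneg : ∀ k, 0 ≤ a k := fun k => (hlow_nonneg _).trans (ha_low k)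
  have haφ : Tendsto (a ∘ φ) atTop (𝓝 0) := by
    have hup : Tendsto (fun k => (w (φ k) - wbar) ⬝ᵥ Pup *ᵥ (w (φ k) - wbar)) atTop (𝓝 0) := by
      have := ((continuous_dotProduct_mulVec_self Pup).tendsto 0).comp
        (tendsto_sub_nhds_zero_iff.2 hcluster)
      rwa [mulVec_zero, dotProduct_zero] at this
    exact squeeze_zero (fun k => ha_nonneg (φ k))
      (fun k => dotProduct_mulVec_self_le_of_posSemidef_sub (hub (φ k)) _) hup
  have ha : Tendsto a atTop (𝓝 0) :=
    (tendsto_iff_tendsto_subseq_of_antitone ha_anti hφ.tendsto_atTop).2 haφ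
  refine tendsto_sub_nhds_zero_iff.1 (hlow.tendsto_zero_of_dotProduct_mulVec_self ?_)
  exact squeeze_zero (fun k => hlow_nonneg _) ha_low ha

/-- Fejér-monotone convergence with variable metrics: if the sequence `w^k`
is nonexpansive towards every point of a nonempty set `W` in the (uniformly bounded) norms
`‖·‖_{P^k}` and has a cluster point `w̄ ∈ W`, then the whole sequence converges to `w̄`. -/
theorem stmt3 {d : ℕ} (P : ℕ → Matrix (Fin d) (Fin d) ℝ)
    (Plow Pup : Matrix (Fin d) (Fin d) ℝ)
    (hPk : ∀ k, (P k).PosDef) (hlow : Plow.PosDef) (hup : Pup.PosDef)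
    (hlb : ∀ k, (P k - Plow).PosSemidef) (hub : ∀ k, (Pup - P k).PosSemidef)
    (W : Set (Fin d → ℝ)) (hW : W.Nonempty)
    (w : ℕ → Fin d → ℝ)
    (hmono : ∀ (k : ℕ), ∀ v ∈ W,
      (w (k + 1) - v) ⬝ᵥ ((P (k + 1)).mulVec (w (k + 1) - v))
        ≤ (w k - v) ⬝ᵥ ((P k).mulVec (w k - v)))
    (wbar : Fin d → ℝ) (hwbar : wbar ∈ W)
    (φ : ℕ → ℕ) (hφ : StrictMono φ)
    (hcluster : Tendsto (w ∘ φ) atTop (nhds wbar)) :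
    Tendsto w atTop (nhds wbar) :=
  stmt3_general P Plow Pup hlow hlb hub W w hmono wbar hwbar φ hφ hcluster
end

section
/- Let β > 0, ρ_z > 0, x^{k+1} ∈ ℝ^p, and z^k ∈ ℝ^m with z^k ≥ 0 componentwise, and set z_j^{k+1} = z_j^k + ρ_z·max(−z_j^k/β, f_j(x^{k+1})) for j = 1,…,m. Then for every z ∈ ℝ^m with z ≥ 0 componentwise: ((β − 2ρ_z)/(2ρ_z²))·‖z^{k+1} − z^k‖² ≤ Ψ_β(x^{k+1}, z^k) − ∑_{j=1}^m z_j f_j(x^{k+1}) − ∑_{j=1}^m (z_j^{k+1} − z_j)·max(−z_j^k/β, f_j(x^{k+1})). -/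
open scoped RealInnerProductSpace

noncomputable section

lemma psi_max_eq (β u v : ℝ) (hβ : 0 < β) :
    psi β u v = v * max (-v / β) u + β / 2 * (max (-v / β) u) ^ 2 := by
  unfold psi
  split_ifs with h
  · have hle : -v / β ≤ u := by
      rw [div_le_iff₀ hβ]; nlinarith
    rw [max_eq_right hle]; ring
  · have hle : u ≤ -v / β := by
      rw [le_div_iff₀ hβ]; nlinarith
    rw [max_eq_left hle]
    field_simp
    ring

/-- Lemma ineq-z: for the `z`-update of LALM and any `z ≥ 0`,
`((β − 2ρ_z)/(2ρ_z²))‖z^{k+1} − z^k‖² ≤ Ψ_β(x^{k+1},z^k) − ∑_j z_j f_j(x^{k+1})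
 − ∑_j (z_j^{k+1} − z_j) max(−z_j^k/β, f_j(x^{k+1}))`. -/
theorem stmt7 {p m : ℕ} (β ρz : ℝ) (hβ : 0 < β) (hρz : 0 < ρz)
    (f : Fin m → EuclideanSpace ℝ (Fin p) → ℝ)
    (xk1 : EuclideanSpace ℝ (Fin p)) (zk zk1 : EuclideanSpace ℝ (Fin m))
    (hzk : ∀ j, 0 ≤ zk j)
    (hz : ∀ j, zk1 j = zk j + ρz * max (-(zk j) / β) (f j xk1)) :
    ∀ z : EuclideanSpace ℝ (Fin m), (∀ j, 0 ≤ z j) →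
      (β - 2 * ρz) / (2 * ρz ^ 2) * ‖zk1 - zk‖ ^ 2
        ≤ PsiAug β f xk1 zk - (∑ j, z j * f j xk1)
          - ∑ j, (zk1 j - z j) * max (-(zk j) / β) (f j xk1) := by
  intro z hzpos
  set M : Fin m → ℝ := fun j => max (-(zk j) / β) (f j xk1) with hM
  have hnorm : ‖zk1 - zk‖ ^ 2 = ∑ j, ρz ^ 2 * (M j) ^ 2 := by
    rw [EuclideanSpace.norm_eq, Real.sq_sqrt (by positivity)]
    refine Finset.sum_congr rfl (fun j _ => ?_)
    simp only [PiLp.sub_apply, Real.norm_eq_abs, sq_abs]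
    rw [hz j]; ring
  rw [hnorm, Finset.mul_sum]
  unfold PsiAug
  rw [sub_sub, ← Finset.sum_add_distrib, ← Finset.sum_sub_distrib]
  refine Finset.sum_le_sum (fun j _ => ?_)
  have hfle : f j xk1 ≤ M j := le_max_right _ _
  have hzM : 0 ≤ z j * (M j - f j xk1) :=
    mul_nonneg (hzpos j) (by linarith)
  have hL : (β - 2 * ρz) / (2 * ρz ^ 2) * (ρz ^ 2 * (M j) ^ 2)
      = (β / 2 - ρz) * (M j) ^ 2 := by
    field_simp
  rw [hL, psi_max_eq β (f j xk1) (zk j) hβ, hz j]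
  show (β / 2 - ρz) * (M j) ^ 2
      ≤ zk j * M j + β / 2 * (M j) ^ 2 - (z j * f j xk1 + (zk j + ρz * M j - z j) * M j)
  nlinarith [hzM]

end
end

section
/- Consider one LALM iteration from (x^k, y^k, z^k) with z^k ≥ 0 componentwise and step sizes η^k, ρ_y, ρ_z > 0, under Assumption (Lip) with dom(h) = ℝ^p. Then for every x with Ax = b and f_j(x) ≤ 0 for all j, every y ∈ ℝ^q, and every z ≥ 0 componentwise: Φ(x^{k+1}; x, y, z) + (η^k/2)‖x^{k+1} − x‖² + (1/(2ρ_y))‖y^{k+1} − y‖² + (1/(2ρ_z))‖z^{k+1} − z‖² + ((β − ρ_y)/2)‖r^{k+1}‖² + ((β − ρ_z)/(2ρ_z²))‖z^{k+1} − z^k‖² + (1/2)(x^{k+1} − x^k)ᵀ[(η^k − L_g − L_Ψ(x^k,z^k))I − βAᵀA](x^{k+1} − x^k) ≤ (η^k/2)‖x^k − x‖² − (β/2)‖r^k‖² + (1/(2ρ_y))‖y^k − y‖² + (1/(2ρ_z))‖z^k − z‖². -/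
/-!
Writing `ψ_β(u, v) = (max (β u + v) 0 ^ 2 - v ^ 2) / (2 β)` shows that `ψ_β(·, v)` is convex,
nondecreasing and `β`-smooth with derivative `max (β u + v) 0`. Composed with the convex,
`L_j`-smooth, `B_j`-Lipschitz constraints this makes `F_β(·, y, z)` convex with a descent
inequality of constant `L_g + L_Ψ` plus the exact quadratic `β ‖A ·‖²`. The linearized proximal
step then yields the three-point inequality for `x`, the `y`-update is an exact identity, and the
`z`-update is a projected step whose optimality gives `∑ z_j f_j(x^{k+1}) ≤ Ψ_β(x^{k+1}, z^k) + …`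
coordinatewise. Adding the three estimates gives the claim.
-/

open scoped RealInnerProductSpace

noncomputable section

/-- `∇_x F_β(x,y,z)`, the `x`-gradient of the smooth part of the augmented Lagrangian. -/
def gradFx {p q m : ℕ} (β : ℝ) (f : Fin m → EuclideanSpace ℝ (Fin p) → ℝ)
    (g' : EuclideanSpace ℝ (Fin p) → EuclideanSpace ℝ (Fin p))
    (f' : Fin m → EuclideanSpace ℝ (Fin p) → EuclideanSpace ℝ (Fin p))
    (A : EuclideanSpace ℝ (Fin p) →L[ℝ] EuclideanSpace ℝ (Fin q))
    (b : EuclideanSpace ℝ (Fin q))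
    (x : EuclideanSpace ℝ (Fin p)) (y : EuclideanSpace ℝ (Fin q))
    (z : EuclideanSpace ℝ (Fin m)) : EuclideanSpace ℝ (Fin p) :=
  g' x + (ContinuousLinearMap.adjoint A) (y + β • (A x - b))
    + ∑ j, max (β * f j x + z j) 0 • f' j x

open Set Filter Topology

section Gradient

variable {E : Type*} [NormedAddCommGroup E] [InnerProductSpace ℝ E] [CompleteSpace E]

theorem HasGradientAt.hasDerivAt_comp_add_smul {f : E → ℝ} {f' x v : E} {t : ℝ}
    (hf : HasGradientAt f f' (x + t • v)) :
    HasDerivAt (fun s : ℝ => f (x + s • v)) ⟪f', v⟫ t := by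
  have hline : HasDerivAt (fun s : ℝ => x + s • v) v t := by
    simpa using ((hasDerivAt_id t).smul_const v).const_add x
  simpa [Function.comp_def] using hf.hasFDerivAt.comp_hasDerivAt t hline

theorem ConvexOn.add_inner_le_of_hasGradientAt {f : E → ℝ} {f' x : E}
    (hconv : ConvexOn ℝ univ f) (hf : HasGradientAt f f' x) (y : E) :
    f x + ⟪f', y - x⟫ ≤ f y := by
  have hline : ConvexOn ℝ univ (fun t : ℝ => f (x + t • (y - x))) := by
    simpa [Function.comp_def, AffineMap.lineMap_apply, add_comm] using
      hconv.comp_affineMap (AffineMap.lineMap x y)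
  have := hline.le_slope_of_hasDerivAt (mem_univ 0) (mem_univ 1) one_pos
    (HasGradientAt.hasDerivAt_comp_add_smul (by simpa using hf))
  simp only [slope_def_field, one_smul, add_sub_cancel, zero_smul, add_zero, sub_zero,
    div_one] at this
  linarith

theorem abs_sub_le_of_norm_gradient_le {f : E → ℝ} {f' : E → E} {B : ℝ}
    (hf : ∀ x, HasGradientAt f (f' x) x) (hB : ∀ x, ‖f' x‖ ≤ B) (x y : E) :
    |f y - f x| ≤ B * ‖y - x‖ := by
  simpa [Real.norm_eq_abs] using Convex.norm_image_sub_le_of_norm_hasFDerivWithin_le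
    (f' := fun a => InnerProductSpace.toDual ℝ E (f' a))
    (fun a _ => (hf a).hasFDerivAt.hasFDerivWithinAt) (fun a _ => by simpa using hB a)
    convex_univ (mem_univ x) (mem_univ y)

theorem le_add_inner_add_sq_of_lipschitz_gradient {f : E → ℝ} {f' : E → E} {L : ℝ}
    (hf : ∀ x, HasGradientAt f (f' x) x) (hL : ∀ x y, ‖f' x - f' y‖ ≤ L * ‖x - y‖) (x y : E) :
    f y ≤ f x + ⟪f' x, y - x⟫ + L / 2 * ‖y - x‖ ^ 2 := by
  set v := y - x
  have hderiv (t : ℝ) : HasDerivAt (fun s : ℝ => f (x + s • v) - s * ⟪f' x, v⟫)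
      (⟪f' (x + t • v) - f' x, v⟫) t := by
    rw [inner_sub_left]
    exact (hf _).hasDerivAt_comp_add_smul.sub (by simpa using (hasDerivAt_id t).mul_const _)
  have hbound : ∀ t ∈ Ico (0 : ℝ) 1, ⟪f' (x + t • v) - f' x, v⟫ ≤ L * ‖v‖ ^ 2 * t := by
    intro t ht
    calc ⟪f' (x + t • v) - f' x, v⟫ ≤ ‖f' (x + t • v) - f' x‖ * ‖v‖ := real_inner_le_norm _ _
      _ ≤ L * ‖t • v‖ * ‖v‖ := by
        gcongr
        simpa using hL (x + t • v) x
      _ = L * ‖v‖ ^ 2 * t := by rw [norm_smul, Real.norm_of_nonneg ht.1]; ring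
  have hquad (t : ℝ) : HasDerivAt (fun s : ℝ => f x + L * ‖v‖ ^ 2 / 2 * s ^ 2)
      (L * ‖v‖ ^ 2 * t) t :=
    (((hasDerivAt_pow 2 t).const_mul (L * ‖v‖ ^ 2 / 2)).const_add (f x)).congr_deriv
      (by push_cast; ring)
  have := image_le_of_deriv_right_le_deriv_boundary
    (fun t _ => (hderiv t).continuousAt.continuousWithinAt)
    (fun t _ => (hderiv t).hasDerivWithinAt) (by simp)
    (fun t _ => (hquad t).continuousAt.continuousWithinAt)
    (fun t _ => (hquad t).hasDerivWithinAt) hbound (right_mem_Icc.2 zero_le_one)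
  simp only [one_smul, one_mul, one_pow, v, add_sub_cancel] at this
  linarith

end Gradient

theorem nonneg_of_forall_Ioc_nonneg_add_mul {c K : ℝ} (h : ∀ t ∈ Ioc (0 : ℝ) 1, 0 ≤ c + K * t) :
    0 ≤ c := by
  have hlim : Tendsto (fun t => c + K * t) (𝓝[>] 0) (𝓝 (c + K * 0)) :=
    tendsto_nhdsWithin_of_tendsto_nhds ((by fun_prop : Continuous fun t => c + K * t).tendsto 0)
  rw [mul_zero, add_zero] at hlim
  exact ge_of_tendsto hlim (by filter_upwards [Ioc_mem_nhdsGT one_pos] using h)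

section InnerProductSpace

variable {E : Type*} [NormedAddCommGroup E] [InnerProductSpace ℝ E]

theorem ConvexOn.add_inner_le_of_isMinOn {h : E → ℝ} (hh : ConvexOn ℝ univ h)
    {G x₀ x₁ : E} {η : ℝ}
    (hmin : IsMinOn (fun x => h x + ⟪G, x⟫ + η / 2 * ‖x - x₀‖ ^ 2) univ x₁)
    (x : E) : h x₁ + ⟪G + η • (x₁ - x₀), x₁ - x⟫ ≤ h x := by
  set w := x - x₁
  -- Compare `x₁` with `x₁ + t • w`: convexity of `h` and the exact expansion of the quadratic
  -- leave `0 ≤ t * (c + K * t)` for every `t ∈ (0, 1]`, where `c` is the claimed slack.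
  suffices 0 ≤ h x - h x₁ + ⟪G + η • (x₁ - x₀), w⟫ by
    rw [show x₁ - x = -w by simp [w], inner_neg_right]; linarith
  refine nonneg_of_forall_Ioc_nonneg_add_mul (K := η / 2 * ‖w‖ ^ 2) fun t ht => ?_
  have hconv : h (x₁ + t • w) ≤ (1 - t) * h x₁ + t * h x := by
    have := hh.2 (mem_univ x₁) (mem_univ x) (sub_nonneg.2 ht.2) ht.1.le (by ring)
    rwa [show (1 - t) • x₁ + t • x = x₁ + t • w by simp [w, sub_smul, smul_sub]; abel] at this
  have hquad : ‖x₁ + t • w - x₀‖ ^ 2 = ‖x₁ - x₀‖ ^ 2 + 2 * t * ⟪x₁ - x₀, w⟫ + t ^ 2 * ‖w‖ ^ 2 := by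
    rw [show x₁ + t • w - x₀ = (x₁ - x₀) + t • w by abel, norm_add_sq_real, inner_smul_right,
      norm_smul, mul_pow, Real.norm_eq_abs, sq_abs]
    ring
  have hmint := isMinOn_univ_iff.1 hmin (x₁ + t • w)
  rw [hquad, inner_add_right, inner_smul_right] at hmint
  rw [inner_add_left, real_inner_smul_left]
  refine (mul_nonneg_iff_of_pos_left ht.1).1 ?_
  linarith

theorem ConvexOn.prox_step_le {F h : E → ℝ} (hh : ConvexOn ℝ univ h) {G x₀ x₁ x : E}
    {η U c : ℝ}
    (hmin : IsMinOn (fun x => h x + ⟪G, x⟫ + η / 2 * ‖x - x₀‖ ^ 2) univ x₁)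
    (hupper : F x₁ ≤ F x₀ + ⟪G, x₁ - x₀⟫ + U) (hlower : F x₀ + ⟪G, x - x₀⟫ + c ≤ F x) :
    F x₁ + h x₁ + c + η / 2 * ‖x₁ - x‖ ^ 2 + η / 2 * ‖x₁ - x₀‖ ^ 2 - U
      ≤ F x + h x + η / 2 * ‖x₀ - x‖ ^ 2 := by
  have hvar := hh.add_inner_le_of_isMinOn hmin x
  have hsplit : x₁ - x = (x₁ - x₀) - (x - x₀) := by abel
  have hpolar : ‖x₁ - x‖ ^ 2 = ‖x₁ - x₀‖ ^ 2 - 2 * ⟪x₁ - x₀, x - x₀⟫ + ‖x - x₀‖ ^ 2 := by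
    rw [hsplit, norm_sub_sq_real]
  have hG : ⟪G, x₁ - x⟫ = ⟪G, x₁ - x₀⟫ - ⟪G, x - x₀⟫ := by rw [hsplit, inner_sub_right]
  have hΔ : ⟪x₁ - x₀, x₁ - x⟫ = ‖x₁ - x₀‖ ^ 2 - ⟪x₁ - x₀, x - x₀⟫ := by
    rw [hsplit, inner_sub_right, real_inner_self_eq_norm_sq]
  rw [inner_add_left, real_inner_smul_left, hG, hΔ] at hvar
  rw [norm_sub_rev x₀ x, hpolar]
  linarith

theorem inner_add_mul_norm_sq_add (β : ℝ) (y r d : E) :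
    ⟪y, r + d⟫ + β / 2 * ‖r + d‖ ^ 2
      = ⟪y, r⟫ + β / 2 * ‖r‖ ^ 2 + ⟪y + β • r, d⟫ + β / 2 * ‖d‖ ^ 2 := by
  rw [norm_add_sq_real, inner_add_right, inner_add_left, real_inner_smul_left]
  ring

theorem inner_add_norm_sq_of_eq_add_smul {y₀ y₁ r : E} {ρ : ℝ} (hρ : ρ ≠ 0)
    (hy : y₁ = y₀ + ρ • r) (y : E) :
    ⟪y, r⟫ + 1 / (2 * ρ) * ‖y₁ - y‖ ^ 2
      = ⟪y₀, r⟫ + 1 / (2 * ρ) * ‖y₀ - y‖ ^ 2 + ρ / 2 * ‖r‖ ^ 2 := by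
  rw [hy, show y₀ + ρ • r - y = (y₀ - y) + ρ • r by abel, norm_add_sq_real, real_inner_smul_right,
    norm_smul, mul_pow, Real.norm_eq_abs, sq_abs, inner_sub_left]
  field_simp
  ring

end InnerProductSpace

theorem sq_max_zero_le (a b : ℝ) :
    max b 0 ^ 2 ≤ max a 0 ^ 2 + 2 * max a 0 * (b - a) + (b - a) ^ 2 := by
  rcases le_total a 0 with ha | ha <;> rcases le_total b 0 with hb | hb <;>
    simp only [max_eq_left, max_eq_right, ha, hb] <;> nlinarith

theorem sq_max_zero_add_le (a b : ℝ) : max a 0 ^ 2 + 2 * max a 0 * (b - a) ≤ max b 0 ^ 2 := by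
  rcases le_total a 0 with ha | ha <;> rcases le_total b 0 with hb | hb <;>
    simp only [max_eq_left, max_eq_right, ha, hb] <;> nlinarith [sq_nonneg (a - b)]

namespace psi

section Scalar

variable {β : ℝ}

theorem eq_sq_max (hβ : β ≠ 0) (u v : ℝ) :
    psi β u v = (max (β * u + v) 0 ^ 2 - v ^ 2) / (2 * β) := by
  unfold psi
  split_ifs with h
  · rw [max_eq_left h]; field_simp; ring
  · rw [max_eq_right (not_le.1 h).le]; ring

theorem le_add_mul_add_sq (hβ : 0 < β) (u₀ u₁ v : ℝ) :
    psi β u₁ v ≤ psi β u₀ v + max (β * u₀ + v) 0 * (u₁ - u₀) + β / 2 * (u₁ - u₀) ^ 2 :=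
  calc psi β u₁ v = (max (β * u₁ + v) 0 ^ 2 - v ^ 2) / (2 * β) := eq_sq_max hβ.ne' _ _
    _ ≤ (max (β * u₀ + v) 0 ^ 2 + 2 * max (β * u₀ + v) 0 * (β * u₁ + v - (β * u₀ + v))
          + (β * u₁ + v - (β * u₀ + v)) ^ 2 - v ^ 2) / (2 * β) := by
      gcongr
      exact sq_max_zero_le _ _
    _ = _ := by rw [eq_sq_max hβ.ne']; field_simp; ring

theorem add_mul_le (hβ : 0 < β) (u₀ u₁ v : ℝ) :
    psi β u₀ v + max (β * u₀ + v) 0 * (u₁ - u₀) ≤ psi β u₁ v :=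
  calc psi β u₀ v + max (β * u₀ + v) 0 * (u₁ - u₀)
      = (max (β * u₀ + v) 0 ^ 2 + 2 * max (β * u₀ + v) 0 * (β * u₁ + v - (β * u₀ + v))
          - v ^ 2) / (2 * β) := by rw [eq_sq_max hβ.ne']; field_simp; ring
    _ ≤ (max (β * u₁ + v) 0 ^ 2 - v ^ 2) / (2 * β) := by
      gcongr
      exact sq_max_zero_add_le _ _
    _ = psi β u₁ v := (eq_sq_max hβ.ne' _ _).symm

theorem nonpos (hβ : 0 < β) {u v : ℝ} (hu : u ≤ 0) (hv : 0 ≤ v) : psi β u v ≤ 0 := by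
  rw [eq_sq_max hβ.ne']
  refine div_nonpos_of_nonpos_of_nonneg (sub_nonpos.2 ?_) (by positivity)
  exact pow_le_pow_left₀ (le_max_right _ _) (max_le (by nlinarith) hv) 2

theorem eq_mul_max_add_sq (hβ : 0 < β) (u v : ℝ) :
    psi β u v = v * max (-v / β) u + β / 2 * max (-v / β) u ^ 2 := by
  unfold psi
  split_ifs with h
  · rw [max_eq_right (by rw [div_le_iff₀ hβ]; linarith)]; ring
  · rw [max_eq_left (by rw [le_div_iff₀ hβ]; linarith [not_le.1 h])]
    field_simp
    ring

theorem mul_add_sq_le_add_sq {β ρ u v z : ℝ} (hβ : 0 < β) (hρ : ρ ≠ 0) (hz : 0 ≤ z) :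
    z * u + 1 / (2 * ρ) * (v + ρ * max (-v / β) u - z) ^ 2
      + (β - ρ) / (2 * ρ ^ 2) * (ρ * max (-v / β) u) ^ 2
      ≤ psi β u v + 1 / (2 * ρ) * (v - z) ^ 2 := by
  rw [eq_mul_max_add_sq hβ, ← sub_nonneg]
  have key : v * max (-v / β) u + β / 2 * max (-v / β) u ^ 2 + 1 / (2 * ρ) * (v - z) ^ 2
      - (z * u + 1 / (2 * ρ) * (v + ρ * max (-v / β) u - z) ^ 2
        + (β - ρ) / (2 * ρ ^ 2) * (ρ * max (-v / β) u) ^ 2) = z * (max (-v / β) u - u) := by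
    field_simp
    ring
  rw [key]
  exact mul_nonneg hz (sub_nonneg.2 (le_max_right _ _))

end Scalar

section Composition

variable {E : Type*} [NormedAddCommGroup E] [InnerProductSpace ℝ E] [CompleteSpace E]
  {β : ℝ} {f : E → ℝ} {f' : E → E}

theorem comp_le (hβ : 0 < β) (hf : ∀ x, HasGradientAt f (f' x) x) {L B : ℝ}
    (hL : ∀ x y, ‖f' x - f' y‖ ≤ L * ‖x - y‖) (hB : ∀ x, ‖f' x‖ ≤ B) (x x' : E) (v : ℝ) :
    psi β (f x') v ≤ psi β (f x) v + max (β * f x + v) 0 * ⟪f' x, x' - x⟫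
      + (β * B ^ 2 + L * max (β * f x + v) 0) / 2 * ‖x' - x‖ ^ 2 := by
  have hsq : (f x' - f x) ^ 2 ≤ B ^ 2 * ‖x' - x‖ ^ 2 := by
    rw [← mul_pow, ← sq_abs]
    exact pow_le_pow_left₀ (abs_nonneg _) (abs_sub_le_of_norm_gradient_le hf hB x x') 2
  calc psi β (f x') v
      ≤ psi β (f x) v + max (β * f x + v) 0 * (f x' - f x) + β / 2 * (f x' - f x) ^ 2 :=
        le_add_mul_add_sq hβ _ _ _
    _ ≤ psi β (f x) v + max (β * f x + v) 0 * (⟪f' x, x' - x⟫ + L / 2 * ‖x' - x‖ ^ 2)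
          + β / 2 * (B ^ 2 * ‖x' - x‖ ^ 2) := by
        gcongr
        linarith [le_add_inner_add_sq_of_lipschitz_gradient hf hL x x']
    _ = _ := by ring

theorem comp_add_inner_le (hβ : 0 < β) (hconv : ConvexOn ℝ univ f)
    (hf : ∀ x, HasGradientAt f (f' x) x) (x x' : E) (v : ℝ) :
    psi β (f x) v + max (β * f x + v) 0 * ⟪f' x, x' - x⟫ ≤ psi β (f x') v :=
  calc psi β (f x) v + max (β * f x + v) 0 * ⟪f' x, x' - x⟫
      ≤ psi β (f x) v + max (β * f x + v) 0 * (f x' - f x) := by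
        gcongr
        linarith [hconv.add_inner_le_of_hasGradientAt (hf x) x']
    _ ≤ psi β (f x') v := add_mul_le hβ _ _ _

end Composition

end psi

section LALM

variable {p q m : ℕ} {β : ℝ} {g : EuclideanSpace ℝ (Fin p) → ℝ}
  {f : Fin m → EuclideanSpace ℝ (Fin p) → ℝ}
  {g' : EuclideanSpace ℝ (Fin p) → EuclideanSpace ℝ (Fin p)}
  {f' : Fin m → EuclideanSpace ℝ (Fin p) → EuclideanSpace ℝ (Fin p)}
  {A : EuclideanSpace ℝ (Fin p) →L[ℝ] EuclideanSpace ℝ (Fin q)} {b : EuclideanSpace ℝ (Fin q)}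

/-- The paper's `F_β`: the augmented Lagrangian without its nonsmooth part `h`. -/
def smoothAugLagrangian (β : ℝ) (g : EuclideanSpace ℝ (Fin p) → ℝ)
    (f : Fin m → EuclideanSpace ℝ (Fin p) → ℝ)
    (A : EuclideanSpace ℝ (Fin p) →L[ℝ] EuclideanSpace ℝ (Fin q)) (b : EuclideanSpace ℝ (Fin q))
    (x : EuclideanSpace ℝ (Fin p)) (y : EuclideanSpace ℝ (Fin q))
    (z : EuclideanSpace ℝ (Fin m)) : ℝ :=
  g x + ⟪y, A x - b⟫ + β / 2 * ‖A x - b‖ ^ 2 + PsiAug β f x z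

theorem inner_gradFx (x d : EuclideanSpace ℝ (Fin p)) (y : EuclideanSpace ℝ (Fin q))
    (z : EuclideanSpace ℝ (Fin m)) :
    ⟪gradFx β f g' f' A b x y z, d⟫ = ⟪g' x, d⟫ + ⟪y + β • (A x - b), A d⟫
      + ∑ j, max (β * f j x + z j) 0 * ⟪f' j x, d⟫ := by
  simp only [gradFx, inner_add_left, ContinuousLinearMap.adjoint_inner_left, sum_inner,
    real_inner_smul_left]

variable (β g f A b) in
theorem smoothAugLagrangian_sub (x x' : EuclideanSpace ℝ (Fin p))
    (y : EuclideanSpace ℝ (Fin q)) (z : EuclideanSpace ℝ (Fin m)) :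
    smoothAugLagrangian β g f A b x' y z - smoothAugLagrangian β g f A b x y z
      = g x' - g x + ⟪y + β • (A x - b), A (x' - x)⟫ + β / 2 * ‖A (x' - x)‖ ^ 2
        + (PsiAug β f x' z - PsiAug β f x z) := by
  have hsplit : A x' - b = (A x - b) + A (x' - x) := by rw [map_sub]; abel
  have := inner_add_mul_norm_sq_add β y (A x - b) (A (x' - x))
  simp only [smoothAugLagrangian, hsplit]
  linarith

theorem smoothAugLagrangian_le_add_inner (hβ : 0 < β) (hg : ∀ x, HasGradientAt g (g' x) x)
    (hf : ∀ j x, HasGradientAt (f j) (f' j x) x) {Lg : ℝ} {L B : Fin m → ℝ}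
    (hLg : ∀ x x', ‖g' x - g' x'‖ ≤ Lg * ‖x - x'‖)
    (hLf : ∀ j x x', ‖f' j x - f' j x'‖ ≤ L j * ‖x - x'‖) (hBf : ∀ j x, ‖f' j x‖ ≤ B j)
    (x x' : EuclideanSpace ℝ (Fin p)) (y : EuclideanSpace ℝ (Fin q))
    (z : EuclideanSpace ℝ (Fin m)) :
    smoothAugLagrangian β g f A b x' y z ≤ smoothAugLagrangian β g f A b x y z
      + ⟪gradFx β f g' f' A b x y z, x' - x⟫
      + ((Lg + ∑ j, (β * B j ^ 2 + L j * max (β * f j x + z j) 0)) / 2 * ‖x' - x‖ ^ 2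
        + β / 2 * ‖A (x' - x)‖ ^ 2) := by
  have hΨ : PsiAug β f x' z ≤ PsiAug β f x z
      + ∑ j, max (β * f j x + z j) 0 * ⟪f' j x, x' - x⟫
      + (∑ j, (β * B j ^ 2 + L j * max (β * f j x + z j) 0)) / 2 * ‖x' - x‖ ^ 2 := by
    simp only [PsiAug, Finset.sum_div, Finset.sum_mul, ← Finset.sum_add_distrib]
    exact Finset.sum_le_sum fun j _ => psi.comp_le hβ (hf j) (hLf j) (hBf j) x x' (z j)
  have hgx := le_add_inner_add_sq_of_lipschitz_gradient hg hLg x x'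
  have hdiff := smoothAugLagrangian_sub β g f A b x x' y z
  rw [inner_gradFx]
  linarith

theorem smoothAugLagrangian_add_inner_le (hβ : 0 < β) (hgconv : ConvexOn ℝ univ g)
    (hfconv : ∀ j, ConvexOn ℝ univ (f j)) (hg : ∀ x, HasGradientAt g (g' x) x)
    (hf : ∀ j x, HasGradientAt (f j) (f' j x) x)
    (x x' : EuclideanSpace ℝ (Fin p)) (y : EuclideanSpace ℝ (Fin q))
    (z : EuclideanSpace ℝ (Fin m)) :
    smoothAugLagrangian β g f A b x y z + ⟪gradFx β f g' f' A b x y z, x' - x⟫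
      + β / 2 * ‖A (x' - x)‖ ^ 2 ≤ smoothAugLagrangian β g f A b x' y z := by
  have hΨ : PsiAug β f x z + ∑ j, max (β * f j x + z j) 0 * ⟪f' j x, x' - x⟫
      ≤ PsiAug β f x' z := by
    simp only [PsiAug, ← Finset.sum_add_distrib]
    exact Finset.sum_le_sum fun j _ => psi.comp_add_inner_le hβ (hfconv j) (hf j) x x' (z j)
  have hgx := hgconv.add_inner_le_of_hasGradientAt (hg x) x'
  have hdiff := smoothAugLagrangian_sub β g f A b x x' y z
  rw [inner_gradFx]
  linarith

theorem smoothAugLagrangian_le_of_feasible (hβ : 0 < β) {x : EuclideanSpace ℝ (Fin p)}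
    (hAx : A x = b) (hfx : ∀ j, f j x ≤ 0) (y : EuclideanSpace ℝ (Fin q))
    {z : EuclideanSpace ℝ (Fin m)} (hz : ∀ j, 0 ≤ z j) :
    smoothAugLagrangian β g f A b x y z ≤ g x := by
  have hΨ : PsiAug β f x z ≤ 0 := Finset.sum_nonpos fun j _ => psi.nonpos hβ (hfx j) (hz j)
  simp only [smoothAugLagrangian, hAx, sub_self, inner_zero_right, norm_zero]
  linarith

theorem sum_mul_add_norm_sq_le_PsiAug {ρ : ℝ} (hβ : 0 < β) (hρ : ρ ≠ 0)
    (x : EuclideanSpace ℝ (Fin p)) {z z₀ z₁ : EuclideanSpace ℝ (Fin m)} (hz : ∀ j, 0 ≤ z j)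
    (hz₁ : ∀ j, z₁ j = z₀ j + ρ * max (-(z₀ j) / β) (f j x)) :
    ∑ j, z j * f j x + 1 / (2 * ρ) * ‖z₁ - z‖ ^ 2 + (β - ρ) / (2 * ρ ^ 2) * ‖z₁ - z₀‖ ^ 2
      ≤ PsiAug β f x z₀ + 1 / (2 * ρ) * ‖z₀ - z‖ ^ 2 := by
  simp only [EuclideanSpace.real_norm_sq_eq, PiLp.sub_apply, hz₁, Finset.mul_sum, PsiAug,
    ← Finset.sum_add_distrib, add_sub_cancel_left]
  exact Finset.sum_le_sum fun j _ => psi.mul_add_sq_le_add_sq hβ hρ (hz j)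

end LALM

theorem stmt8_general {p q m : ℕ}
    (β ρy ρz ηk Lg : ℝ) (L B : Fin m → ℝ)
    (hβ : 0 < β) (hρy : 0 < ρy) (hρz : 0 < ρz)
    (g h : EuclideanSpace ℝ (Fin p) → ℝ)
    (f : Fin m → EuclideanSpace ℝ (Fin p) → ℝ)
    (g' : EuclideanSpace ℝ (Fin p) → EuclideanSpace ℝ (Fin p))
    (f' : Fin m → EuclideanSpace ℝ (Fin p) → EuclideanSpace ℝ (Fin p))
    (A : EuclideanSpace ℝ (Fin p) →L[ℝ] EuclideanSpace ℝ (Fin q))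
    (b : EuclideanSpace ℝ (Fin q))
    (hgconv : ConvexOn ℝ Set.univ g) (hhconv : ConvexOn ℝ Set.univ h)
    (hfconv : ∀ j, ConvexOn ℝ Set.univ (f j))
    (hg : ∀ x, HasGradientAt g (g' x) x)
    (hf : ∀ j x, HasGradientAt (f j) (f' j x) x)
    -- Assumption (Lip) with `dom(h) = ℝ^p`
    (hLg : ∀ xh xt, ‖g' xh - g' xt‖ ≤ Lg * ‖xh - xt‖)
    (hLf : ∀ j xh xt, ‖f' j xh - f' j xt‖ ≤ L j * ‖xh - xt‖)
    (hBf : ∀ j x, ‖f' j x‖ ≤ B j)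
    -- one LALM iteration from `(x^k, y^k, z^k)`
    (xk xk1 : EuclideanSpace ℝ (Fin p)) (yk yk1 : EuclideanSpace ℝ (Fin q))
    (zk zk1 : EuclideanSpace ℝ (Fin m))
    (hzk : ∀ j, 0 ≤ zk j)
    (hxmin : ∀ x : EuclideanSpace ℝ (Fin p),
      h xk1 + ⟪gradFx β f g' f' A b xk yk zk, xk1⟫ + ηk / 2 * ‖xk1 - xk‖ ^ 2
        ≤ h x + ⟪gradFx β f g' f' A b xk yk zk, x⟫ + ηk / 2 * ‖x - xk‖ ^ 2)
    (hy : yk1 = yk + ρy • (A xk1 - b))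
    (hz : ∀ j, zk1 j = zk j + ρz * max (-(zk j) / β) (f j xk1)) :
    -- conclusion: for feasible `x`, any `y` and any `z ≥ 0`
    ∀ (x : EuclideanSpace ℝ (Fin p)) (y : EuclideanSpace ℝ (Fin q))
      (z : EuclideanSpace ℝ (Fin m)), A x = b → (∀ j, f j x ≤ 0) → (∀ j, 0 ≤ z j) →
      ((g xk1 + h xk1) - (g x + h x) + ⟪y, A xk1 - b⟫ + ∑ j, z j * f j xk1)
        + ηk / 2 * ‖xk1 - x‖ ^ 2 + 1 / (2 * ρy) * ‖yk1 - y‖ ^ 2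
        + 1 / (2 * ρz) * ‖zk1 - z‖ ^ 2
        + (β - ρy) / 2 * ‖A xk1 - b‖ ^ 2 + (β - ρz) / (2 * ρz ^ 2) * ‖zk1 - zk‖ ^ 2
        + 1 / 2 * ((ηk - Lg - ∑ j, (β * (B j) ^ 2 + L j * max (β * f j xk + zk j) 0))
              * ‖xk1 - xk‖ ^ 2 - β * ‖A (xk1 - xk)‖ ^ 2)
      ≤ ηk / 2 * ‖xk - x‖ ^ 2 - β / 2 * ‖A xk - b‖ ^ 2
        + 1 / (2 * ρy) * ‖yk - y‖ ^ 2 + 1 / (2 * ρz) * ‖zk - z‖ ^ 2 := by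
  intro x y z hAx hfx hz0
  have hstep := hhconv.prox_step_le (F := (smoothAugLagrangian β g f A b · yk zk))
    (isMinOn_univ_iff.2 hxmin)
    (smoothAugLagrangian_le_add_inner hβ hg hf hLg hLf hBf xk xk1 yk zk)
    (smoothAugLagrangian_add_inner_le hβ hgconv hfconv hg hf xk x yk zk)
  have hfeas := smoothAugLagrangian_le_of_feasible (g := g) hβ hAx hfx yk hzk
  have hres : ‖A (x - xk)‖ = ‖A xk - b‖ := by rw [map_sub, hAx, norm_sub_rev]
  have hdual_y := inner_add_norm_sq_of_eq_add_smul hρy.ne' hy y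
  have hdual_z := sum_mul_add_norm_sq_le_PsiAug hβ hρz.ne' xk1 hz0 hz
  simp only [smoothAugLagrangian, hres] at hstep hfeas
  linarith

/-- Theorem: one-iteration progress of LALM. -/
theorem stmt8 {p q m : ℕ}
    (β ρy ρz ηk Lg : ℝ) (L B : Fin m → ℝ)
    (hβ : 0 < β) (hρy : 0 < ρy) (hρz : 0 < ρz) (hηk : 0 < ηk)
    (g h : EuclideanSpace ℝ (Fin p) → ℝ)
    (f : Fin m → EuclideanSpace ℝ (Fin p) → ℝ)
    (g' : EuclideanSpace ℝ (Fin p) → EuclideanSpace ℝ (Fin p))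
    (f' : Fin m → EuclideanSpace ℝ (Fin p) → EuclideanSpace ℝ (Fin p))
    (A : EuclideanSpace ℝ (Fin p) →L[ℝ] EuclideanSpace ℝ (Fin q))
    (b : EuclideanSpace ℝ (Fin q))
    (hgconv : ConvexOn ℝ Set.univ g) (hhconv : ConvexOn ℝ Set.univ h)
    (hfconv : ∀ j, ConvexOn ℝ Set.univ (f j))
    (hg : ∀ x, HasGradientAt g (g' x) x)
    (hf : ∀ j x, HasGradientAt (f j) (f' j x) x)
    -- Assumption (Lip) with `dom(h) = ℝ^p`
    (hLg : ∀ xh xt, ‖g' xh - g' xt‖ ≤ Lg * ‖xh - xt‖)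
    (hLf : ∀ j xh xt, ‖f' j xh - f' j xt‖ ≤ L j * ‖xh - xt‖)
    (hBf : ∀ j x, ‖f' j x‖ ≤ B j)
    -- one LALM iteration from `(x^k, y^k, z^k)`
    (xk xk1 : EuclideanSpace ℝ (Fin p)) (yk yk1 : EuclideanSpace ℝ (Fin q))
    (zk zk1 : EuclideanSpace ℝ (Fin m))
    (hzk : ∀ j, 0 ≤ zk j)
    (hxmin : ∀ x : EuclideanSpace ℝ (Fin p),
      h xk1 + ⟪gradFx β f g' f' A b xk yk zk, xk1⟫ + ηk / 2 * ‖xk1 - xk‖ ^ 2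
        ≤ h x + ⟪gradFx β f g' f' A b xk yk zk, x⟫ + ηk / 2 * ‖x - xk‖ ^ 2)
    (hy : yk1 = yk + ρy • (A xk1 - b))
    (hz : ∀ j, zk1 j = zk j + ρz * max (-(zk j) / β) (f j xk1)) :
    -- conclusion: for feasible `x`, any `y` and any `z ≥ 0`
    ∀ (x : EuclideanSpace ℝ (Fin p)) (y : EuclideanSpace ℝ (Fin q))
      (z : EuclideanSpace ℝ (Fin m)), A x = b → (∀ j, f j x ≤ 0) → (∀ j, 0 ≤ z j) →
      ((g xk1 + h xk1) - (g x + h x) + ⟪y, A xk1 - b⟫ + ∑ j, z j * f j xk1)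
        + ηk / 2 * ‖xk1 - x‖ ^ 2 + 1 / (2 * ρy) * ‖yk1 - y‖ ^ 2
        + 1 / (2 * ρz) * ‖zk1 - z‖ ^ 2
        + (β - ρy) / 2 * ‖A xk1 - b‖ ^ 2 + (β - ρz) / (2 * ρz ^ 2) * ‖zk1 - zk‖ ^ 2
        + 1 / 2 * ((ηk - Lg - ∑ j, (β * (B j) ^ 2 + L j * max (β * f j xk + zk j) 0))
              * ‖xk1 - xk‖ ^ 2 - β * ‖A (xk1 - xk)‖ ^ 2)
      ≤ ηk / 2 * ‖xk - x‖ ^ 2 - β / 2 * ‖A xk - b‖ ^ 2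
        + 1 / (2 * ρy) * ‖yk - y‖ ^ 2 + 1 / (2 * ρz) * ‖zk - z‖ ^ 2 :=
  stmt8_general β ρy ρz ηk Lg L B hβ hρy hρz g h f g' f' A b hgconv hhconv hfconv hg hf hLg hLf hBf
    xk xk1 yk yk1 zk zk1 hzk hxmin hy hz

end
end

section
/- Let β > 0, J ⊆ {1,…,m}, and points x̂, x* ∈ ℝ^p, ẑ, z* ∈ ℝ^m. Suppose: for every j ∈ J, f_j(x*) = 0, ẑ_j ≥ 0, z_j* ≥ 0, β f_j(x̂) + ẑ_j ≥ 0 and β f_j(x̂) + z_j* ≥ 0; and for every j ∉ J, z_j* = 0, β f_j(x̂) + ẑ_j < 0, β f_j(x̂) < 0, β f_j(x*) + ẑ_j < 0 and β f_j(x*) < 0. Then ∑_{j∈J}(ẑ_j − z_j*) f_j(x̂) = Ψ_β(x̂, ẑ) − Ψ_β(x̂, z*) − Ψ_β(x*, ẑ) + Ψ_β(x*, z*). -/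
noncomputable section

/-! On the branch `βu + v ≥ 0` the function `ψ_β` is affine in `v` with slope `u`, and on the
branch `βu + v < 0` it does not depend on `u`. For `j ∈ J` both `ẑ_j` and `z*_j` lie on the
first branch at `f_j(x̂)`, and `ψ_β(0, ·)` vanishes on `[0, ∞)`, so the `j`-th term of the mixed
difference is `(ẑ_j - z*_j) f_j(x̂)`; for `j ∉ J` all four values lie on the second branch and
the term cancels. -/

section Psi

variable {β u u' v w : ℝ}

theorem psi_of_nonneg (h : 0 ≤ β * u + v) : psi β u v = u * v + β / 2 * u ^ 2 :=
  if_pos h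

theorem psi_of_neg (h : β * u + v < 0) : psi β u v = -(v ^ 2) / (2 * β) :=
  if_neg h.not_ge

theorem psi_zero_left_of_nonneg (hv : 0 ≤ v) : psi β 0 v = 0 := by
  rw [psi_of_nonneg (by simpa using hv)]
  ring

theorem psi_mixed_sub_of_nonneg (hv : 0 ≤ v) (hw : 0 ≤ w) (huv : 0 ≤ β * u + v)
    (huw : 0 ≤ β * u + w) :
    psi β u v - psi β u w - psi β 0 v + psi β 0 w = (v - w) * u := by
  rw [psi_of_nonneg huv, psi_of_nonneg huw, psi_zero_left_of_nonneg hv,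
    psi_zero_left_of_nonneg hw]
  ring

theorem psi_mixed_sub_of_neg (huv : β * u + v < 0) (hu : β * u < 0) (hu'v : β * u' + v < 0)
    (hu' : β * u' < 0) :
    psi β u v - psi β u 0 - psi β u' v + psi β u' 0 = 0 := by
  rw [psi_of_neg huv, psi_of_neg (by simpa using hu), psi_of_neg hu'v,
    psi_of_neg (by simpa using hu')]
  ring

end Psi

theorem stmt13_general {p m : ℕ} (β : ℝ) (J : Finset (Fin m))
    (f : Fin m → EuclideanSpace ℝ (Fin p) → ℝ)
    (xh xs : EuclideanSpace ℝ (Fin p)) (zh zs : EuclideanSpace ℝ (Fin m))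
    (hJin : ∀ j ∈ J, f j xs = 0 ∧ 0 ≤ zh j ∧ 0 ≤ zs j ∧
      0 ≤ β * f j xh + zh j ∧ 0 ≤ β * f j xh + zs j)
    (hJout : ∀ j ∉ J, zs j = 0 ∧ β * f j xh + zh j < 0 ∧ β * f j xh < 0 ∧
      β * f j xs + zh j < 0 ∧ β * f j xs < 0) :
    ∑ j ∈ J, (zh j - zs j) * f j xh
      = PsiAug β f xh zh - PsiAug β f xh zs - PsiAug β f xs zh + PsiAug β f xs zs := by
  have hterm : ∀ j, psi β (f j xh) (zh j) - psi β (f j xh) (zs j) - psi β (f j xs) (zh j)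
      + psi β (f j xs) (zs j) = if j ∈ J then (zh j - zs j) * f j xh else 0 := by
    intro j
    split_ifs with hj
    · obtain ⟨hxs, hzh, hzs, hzh', hzs'⟩ := hJin j hj
      rw [hxs]
      exact psi_mixed_sub_of_nonneg hzh hzs hzh' hzs'
    · obtain ⟨hzs, hxh', hxh, hxs', hxs⟩ := hJout j hj
      rw [hzs]
      exact psi_mixed_sub_of_neg hxh' hxh hxs' hxs
  simp only [PsiAug, ← Finset.sum_sub_distrib, ← Finset.sum_add_distrib, hterm,
    Finset.sum_ite_mem, Finset.univ_inter]

/-- Lemma psi-sum: under the stated sign conditions,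
`∑_{j∈J}(ẑ_j − z_j*) f_j(x̂) = Ψ_β(x̂,ẑ) − Ψ_β(x̂,z*) − Ψ_β(x*,ẑ) + Ψ_β(x*,z*)`. -/
theorem stmt13 {p m : ℕ} (β : ℝ) (hβ : 0 < β) (J : Finset (Fin m))
    (f : Fin m → EuclideanSpace ℝ (Fin p) → ℝ)
    (xh xs : EuclideanSpace ℝ (Fin p)) (zh zs : EuclideanSpace ℝ (Fin m))
    (hJin : ∀ j ∈ J, f j xs = 0 ∧ 0 ≤ zh j ∧ 0 ≤ zs j ∧
      0 ≤ β * f j xh + zh j ∧ 0 ≤ β * f j xh + zs j)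
    (hJout : ∀ j ∉ J, zs j = 0 ∧ β * f j xh + zh j < 0 ∧ β * f j xh < 0 ∧
      β * f j xs + zh j < 0 ∧ β * f j xs < 0) :
    ∑ j ∈ J, (zh j - zs j) * f j xh
      = PsiAug β f xh zh - PsiAug β f xh zs - PsiAug β f xs zh + PsiAug β f xs zs :=
  stmt13_general β J f xh xs zh zs hJin hJout
end
end

section
/- Let β > 0, ρ_z > 0, J ⊆ {1,…,m}, x^{k+1} ∈ ℝ^p, and z^k, z* ∈ ℝ^m with z^k ≥ 0 componentwise, and set z_j^{k+1} = z_j^k + ρ_z·max(−z_j^k/β, f_j(x^{k+1})) for all j. Suppose β f_j(x^{k+1}) + z_j^k > 0 for all j ∈ J, β f_j(x^{k+1}) + z_j^k < 0 for all j ∉ J, and z_j* = 0 for all j ∉ J. Then ∑_{j=1}^m (z_j^{k+1} − z_j*)·max(−z_j^k/β, f_j(x^{k+1})) ≤ (1/ρ_z)‖z^{k+1} − z^k‖² + ∑_{j∈J}(z_j^k − z_j*) f_j(x^{k+1}). -/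
/-! With `M j = max (-zᵏ_j / β) (f_j xᵏ⁺¹)` the update reads `zᵏ⁺¹ = zᵏ + ρ M`, so the left side
equals `∑ (zᵏ_j - z*_j) M j + ρ ∑ M j ²`, and `ρ ∑ M j ²` is exactly `(1/ρ)‖zᵏ⁺¹ - zᵏ‖²`.
The sign conditions select the branch of the max: `M j = f_j xᵏ⁺¹` on `J`, while off `J` the
term is `zᵏ_j · (-zᵏ_j / β) ≤ 0` because `z*_j = 0`. -/

theorem max_neg_div_eq_right_of_nonneg {β a z : ℝ} (hβ : 0 < β) (h : 0 ≤ β * a + z) :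
    max (-z / β) a = a :=
  max_eq_right <| (div_le_iff₀ hβ).2 (by linarith)

theorem max_neg_div_eq_left_of_nonpos {β a z : ℝ} (hβ : 0 < β) (h : β * a + z ≤ 0) :
    max (-z / β) a = -z / β :=
  max_eq_left <| (le_div_iff₀ hβ).2 (by linarith)

theorem mul_neg_div_nonpos {β : ℝ} (hβ : 0 < β) (z : ℝ) : z * (-z / β) ≤ 0 := by
  rw [mul_div_assoc', mul_neg, ← sq]
  exact div_nonpos_of_nonpos_of_nonneg (neg_nonpos.2 (sq_nonneg z)) hβ.le

theorem Finset.sum_mul_le_sum_of_eq_on_of_nonpos_off {ι : Type*} [Fintype ι] [DecidableEq ι]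
    (J : Finset ι) {w g h : ι → ℝ} (hJ : ∀ j ∈ J, g j = h j) (hJc : ∀ j ∉ J, w j * g j ≤ 0) :
    ∑ j, w j * g j ≤ ∑ j ∈ J, w j * h j := by
  rw [← Finset.sum_add_sum_compl J, Finset.sum_congr rfl fun j hj => by rw [hJ j hj]]
  exact add_le_of_le_of_nonpos le_rfl <| Finset.sum_nonpos fun j hj => hJc j (Finset.mem_compl.1 hj)

theorem EuclideanSpace.one_div_mul_norm_sub_sq {ι : Type*} [Fintype ι] {ρ : ℝ} (hρ : ρ ≠ 0)
    {x y : EuclideanSpace ℝ ι} {d : ι → ℝ} (h : ∀ j, y j = x j + ρ * d j) :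
    1 / ρ * ‖y - x‖ ^ 2 = ρ * ∑ j, d j ^ 2 := by
  simp only [EuclideanSpace.real_norm_sq_eq, PiLp.sub_apply, h, add_sub_cancel_left,
    mul_pow, ← Finset.mul_sum]
  field_simp

theorem stmt14_general {p m : ℕ} (β ρz : ℝ) (hβ : 0 < β) (hρz : 0 < ρz) (J : Finset (Fin m))
    (f : Fin m → EuclideanSpace ℝ (Fin p) → ℝ)
    (xk1 : EuclideanSpace ℝ (Fin p)) (zk zk1 zs : EuclideanSpace ℝ (Fin m))
    (hz : ∀ j, zk1 j = zk j + ρz * max (-(zk j) / β) (f j xk1))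
    (hJin : ∀ j ∈ J, 0 < β * f j xk1 + zk j)
    (hJout : ∀ j ∉ J, β * f j xk1 + zk j < 0)
    (hzsout : ∀ j ∉ J, zs j = 0) :
    ∑ j, (zk1 j - zs j) * max (-(zk j) / β) (f j xk1)
      ≤ 1 / ρz * ‖zk1 - zk‖ ^ 2 + ∑ j ∈ J, (zk j - zs j) * f j xk1 := by
  set M : Fin m → ℝ := fun j => max (-(zk j) / β) (f j xk1)
  have hsplit : ∑ j, (zk1 j - zs j) * M j = ∑ j, (zk j - zs j) * M j + ρz * ∑ j, M j ^ 2 := by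
    simp only [hz, Finset.mul_sum, ← Finset.sum_add_distrib]
    exact Finset.sum_congr rfl fun j _ => by ring
  have hbranch : ∑ j, (zk j - zs j) * M j ≤ ∑ j ∈ J, (zk j - zs j) * f j xk1 :=
    Finset.sum_mul_le_sum_of_eq_on_of_nonpos_off J
      (fun j hj => max_neg_div_eq_right_of_nonneg hβ (hJin j hj).le)
      fun j hj => by
        simp only [M, max_neg_div_eq_left_of_nonpos hβ (hJout j hj).le, hzsout j hj, sub_zero]
        exact mul_neg_div_nonpos hβ _
  rw [EuclideanSpace.one_div_mul_norm_sub_sq hρz.ne' hz, hsplit]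
  linarith

/-- Lemma z-zs: under the stated sign conditions on the `z`-update,
`∑_j (z_j^{k+1} − z_j*) max(−z_j^k/β, f_j(x^{k+1}))
  ≤ (1/ρ_z)‖z^{k+1} − z^k‖² + ∑_{j∈J}(z_j^k − z_j*) f_j(x^{k+1})`. -/
theorem stmt14 {p m : ℕ} (β ρz : ℝ) (hβ : 0 < β) (hρz : 0 < ρz) (J : Finset (Fin m))
    (f : Fin m → EuclideanSpace ℝ (Fin p) → ℝ)
    (xk1 : EuclideanSpace ℝ (Fin p)) (zk zk1 zs : EuclideanSpace ℝ (Fin m))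
    (hzk : ∀ j, 0 ≤ zk j)
    (hz : ∀ j, zk1 j = zk j + ρz * max (-(zk j) / β) (f j xk1))
    (hJin : ∀ j ∈ J, 0 < β * f j xk1 + zk j)
    (hJout : ∀ j ∉ J, β * f j xk1 + zk j < 0)
    (hzsout : ∀ j ∉ J, zs j = 0) :
    ∑ j, (zk1 j - zs j) * max (-(zk j) / β) (f j xk1)
      ≤ 1 / ρz * ‖zk1 - zk‖ ^ 2 + ∑ j ∈ J, (zk j - zs j) * f j xk1 :=
  stmt14_general β ρz hβ hρz J f xk1 zk zk1 zs hz hJin hJout hzsout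
end

section
/- Let β > 0 and 0 < ρ_z ≤ β, let x^{k+1} ∈ ℝ^p and z^k ∈ ℝ^m with z^k ≥ 0 componentwise, and set z_j^{k+1} = z_j^k + ρ_z·max(−z_j^k/β, f_j(x^{k+1})) for j = 1,…,m. Then −(1/ρ_z)‖z^{k+1} − z^k‖² ≤ Ψ_β(x^{k+1}, z^k) − Ψ_β(x^{k+1}, z^{k+1}). -/
noncomputable section

lemma key_psi (β ρ u v : ℝ) (hβ : 0 < β) (hρ : 0 < ρ) (hv : 0 ≤ v) :
    -(1/ρ) * (ρ * max (-v/β) u) ^ 2 ≤ psi β u v - psi β u (v + ρ * max (-v/β) u) := by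
  rcases le_total (-v/β) u with h | h
  · rw [max_eq_right h]
    have h1 : 0 ≤ β * u + v := by
      have := mul_nonneg (sub_nonneg.mpr h) hβ.le
      rw [sub_mul, div_mul_cancel₀] at this
      · linarith
      · exact hβ.ne'
    by_cases h2 : 0 ≤ β * u + (v + ρ * u)
    · simp only [psi, if_pos h1, if_pos h2]
      have : -(1/ρ) * (ρ * u) ^ 2 = -(ρ * u^2) := by field_simp
      rw [this]; nlinarith [sq_nonneg u]
    · simp only [psi, if_pos h1, if_neg h2]
      rw [← sub_nonneg]
      have key : (u * v + β / 2 * u ^ 2 - -(v + ρ * u) ^ 2 / (2 * β) - -(1/ρ) * (ρ * u) ^ 2)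
          = (β * u + (v + ρ * u))^2 / (2 * β) := by field_simp; ring
      rw [key]
      positivity
  · rw [max_eq_left h]
    have h1' : β * u + v ≤ 0 := by
      have := mul_nonneg (sub_nonneg.mpr h) hβ.le
      rw [sub_mul, div_mul_cancel₀] at this
      · linarith
      · exact hβ.ne'
    by_cases h1 : 0 ≤ β * u + v
    · have heq : β * u + v = 0 := le_antisymm h1' h1
      have hu : u = -v/β := by field_simp; linarith
      subst hu
      by_cases h2 : 0 ≤ β * (-v/β) + (v + ρ * (-v/β))
      · simp only [psi, if_pos h1, if_pos h2]
        have h3 : 0 ≤ ρ * (-v/β) := by linarith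
        have h4 : ρ * (-v/β) * β = -(ρ*v) := by field_simp
        have h5 : 0 ≤ -(ρ*v) := h4 ▸ mul_nonneg h3 hβ.le
        have hv0 : v = 0 := le_antisymm (by nlinarith) hv
        subst hv0
        simp
      · simp only [psi, if_pos h1, if_neg h2]
        rw [← sub_nonneg]
        have key : ((-v/β) * v + β / 2 * (-v/β) ^ 2 - -(v + ρ * (-v/β)) ^ 2 / (2 * β)
            - -(1/ρ) * (ρ * (-v/β)) ^ 2) = ρ^2 * v^2 / (2 * β^3) := by field_simp; ring
        rw [key]
        positivity
    · have h2 : ¬ (0 ≤ β * u + (v + ρ * (-v/β))) := by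
        push_neg at h1 ⊢
        have : ρ * (-v/β) ≤ 0 := by
          apply mul_nonpos_of_nonneg_of_nonpos hρ.le
          apply div_nonpos_of_nonpos_of_nonneg <;> linarith
        linarith
      simp only [psi, if_neg h1, if_neg h2]
      rw [← sub_nonneg]
      have key : (-v ^ 2 / (2 * β) - -(v + ρ * (-v / β)) ^ 2 / (2 * β) - -(1 / ρ) * (ρ * (-v / β)) ^ 2)
          = ρ^2 * v^2 / (2 * β^3) := by field_simp; ring
      rw [key]
      positivity

/-- Lemma psi-k: for the `z`-update with `0 < ρ_z ≤ β` and `z^k ≥ 0`,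
`−(1/ρ_z)‖z^{k+1} − z^k‖² ≤ Ψ_β(x^{k+1}, z^k) − Ψ_β(x^{k+1}, z^{k+1})`. -/
theorem stmt16 {p m : ℕ} (β ρz : ℝ) (hβ : 0 < β) (hρz : 0 < ρz ∧ ρz ≤ β)
    (f : Fin m → EuclideanSpace ℝ (Fin p) → ℝ)
    (xk1 : EuclideanSpace ℝ (Fin p)) (zk zk1 : EuclideanSpace ℝ (Fin m))
    (hzk : ∀ j, 0 ≤ zk j)
    (hz : ∀ j, zk1 j = zk j + ρz * max (-(zk j) / β) (f j xk1)) :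
    -(1 / ρz) * ‖zk1 - zk‖ ^ 2 ≤ PsiAug β f xk1 zk - PsiAug β f xk1 zk1 := by
  obtain ⟨hρ, hρβ⟩ := hρz
  have hn : ‖zk1 - zk‖ ^ 2 = ∑ j, (zk1 j - zk j) ^ 2 := by
    rw [EuclideanSpace.norm_eq, Real.sq_sqrt (by positivity)]
    congr 1; ext j
    simp [sq_abs]
  rw [hn, PsiAug, PsiAug, ← Finset.sum_sub_distrib, Finset.mul_sum]
  apply Finset.sum_le_sum
  intro j _
  rw [hz j]
  have := key_psi β ρz (f j xk1) (zk j) hβ hρ (hzk j)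
  calc -(1 / ρz) * (zk j + ρz * max (-zk j / β) (f j xk1) - zk j) ^ 2
      = -(1 / ρz) * (ρz * max (-zk j / β) (f j xk1)) ^ 2 := by ring_nf
    _ ≤ _ := this

end
end

section
/- Let β > 0, let x^{k+1} ∈ ℝ^p, r^{k+1} ∈ ℝ^q, y^k ∈ ℝ^q, and z^k ∈ ℝ^m with z^k ≥ 0 componentwise. Then: (i) for every y ∈ ℝ^q, ⟨y, r^{k+1}⟩ ≤ ⟨y^k, r^{k+1}⟩ + (β/2)‖r^{k+1}‖² + (1/(2β))‖y^k − y‖²; and (ii) for every z ∈ ℝ^m with z ≥ 0 componentwise, 0 ≤ Ψ_β(x^{k+1}, z^k) − ∑_{j=1}^m z_j f_j(x^{k+1}) + (1/(2β))‖z^k − z‖². -/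
open scoped RealInnerProductSpace

noncomputable section

/-- Lemma yz-k-bd: the two Young-type bounds
`⟨y, r^{k+1}⟩ ≤ ⟨y^k, r^{k+1}⟩ + (β/2)‖r^{k+1}‖² + (1/(2β))‖y^k − y‖²`, and, for `z ≥ 0`,
`0 ≤ Ψ_β(x^{k+1}, z^k) − ∑_j z_j f_j(x^{k+1}) + (1/(2β))‖z^k − z‖²`. -/
theorem stmt17 {p q m : ℕ} (β : ℝ) (hβ : 0 < β)
    (f : Fin m → EuclideanSpace ℝ (Fin p) → ℝ)
    (xk1 : EuclideanSpace ℝ (Fin p)) (rk1 : EuclideanSpace ℝ (Fin q))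
    (yk : EuclideanSpace ℝ (Fin q)) (zk : EuclideanSpace ℝ (Fin m))
    (hzk : ∀ j, 0 ≤ zk j) :
    (∀ y : EuclideanSpace ℝ (Fin q),
      ⟪y, rk1⟫ ≤ ⟪yk, rk1⟫ + β / 2 * ‖rk1‖ ^ 2 + 1 / (2 * β) * ‖yk - y‖ ^ 2) ∧
    (∀ z : EuclideanSpace ℝ (Fin m), (∀ j, 0 ≤ z j) →
      0 ≤ PsiAug β f xk1 zk - (∑ j, z j * f j xk1) + 1 / (2 * β) * ‖zk - z‖ ^ 2) := by
  constructor
  · intro y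
    have h1 : ⟪y, rk1⟫ - ⟪yk, rk1⟫ = ⟪y - yk, rk1⟫ := by
      rw [inner_sub_left]
    have h2 : ⟪y - yk, rk1⟫ ≤ ‖y - yk‖ * ‖rk1‖ := real_inner_le_norm _ _
    have h3 : ‖yk - y‖ = ‖y - yk‖ := norm_sub_rev _ _
    rw [h3]
    have key : ‖y - yk‖ * ‖rk1‖ ≤ β / 2 * ‖rk1‖ ^ 2 + 1 / (2 * β) * ‖y - yk‖ ^ 2 := by
      rw [← sub_nonneg]
      have heq : β / 2 * ‖rk1‖ ^ 2 + 1 / (2 * β) * ‖y - yk‖ ^ 2 - ‖y - yk‖ * ‖rk1‖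
          = (β * ‖rk1‖ - ‖y - yk‖) ^ 2 / (2 * β) := by field_simp; ring
      rw [heq]; positivity
    linarith
  · intro z hz
    have hnorm : ‖zk - z‖ ^ 2 = ∑ j, (zk j - z j) ^ 2 := by
      rw [EuclideanSpace.norm_eq, Real.sq_sqrt (by positivity)]
      refine Finset.sum_congr rfl fun j _ => by
        simp [Real.norm_eq_abs, sq_abs]
    rw [hnorm, PsiAug, Finset.mul_sum, ← Finset.sum_sub_distrib, ← Finset.sum_add_distrib]
    apply Finset.sum_nonneg
    intro j _
    have hzj := hz j
    have hzkj := hzk j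
    set u := f j xk1
    set v := zk j
    unfold psi
    split_ifs with h
    · have key : v * u + β / 2 * u ^ 2 - z j * u + 1 / (2 * β) * (v - z j) ^ 2
          = β / 2 * (u + (v - z j) / β) ^ 2 := by
        field_simp
        ring
      nlinarith [sq_nonneg (u + (v - z j) / β)]
    · push_neg at h
      have hkey : 0 ≤ z j * (z j - 2 * v - 2 * β * u) :=
        mul_nonneg hzj (by nlinarith)
      have heq : -(v ^ 2) / (2 * β) - z j * u + 1 / (2 * β) * (v - z j) ^ 2
          = z j * (z j - 2 * v - 2 * β * u) / (2 * β) := by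
        field_simp; ring
      have : 0 ≤ z j * (z j - 2 * v - 2 * β * u) / (2 * β) := by positivity
      linarith


end
end
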